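/- arXiv:1511.08589 — 3 statements merged into one kernel-verified Lean document; each statement's English description precedes it below -/
import Mathlib

section
/- (Potential-based shaping preserves values) Let M be a finite MDP with transition kernel P, rewards r_a(s), and discount α ∈ (0,1). Let ψ : S → ℝ and define the shaped reward R'(s,a,s') = αψ(s') − ψ(s). Then for every stationary policy π, the Q-function in the shaped MDP satisfies Q'_π(s,a) = Q_π(s,a) − ψ(s) for all (s,a). -/
/-- Potential-based shaping shifts the Q-function of any stationary policy by -ψ. -/
theorem stmt_6 {S A : Type*} [Fintype S] [Fintype A]
    (p : S → A → S → ℝ) (hp : ∀ s a s', 0 ≤ p s a s')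
    (hsum : ∀ s a, ∑ s', p s a s' = 1)
    (r : S → A → S → ℝ) (α : ℝ) (hα : α ∈ Set.Ioo (0 : ℝ) 1)
    (ψ : S → ℝ) (π : S → A) (Q Q' : S → A → ℝ)
    (hQ : ∀ s a, Q s a = ∑ s', p s a s' * (r s a s' + α * Q s' (π s')))
    (hQ' : ∀ s a, Q' s a =
      ∑ s', p s a s' * ((r s a s' + (α * ψ s' - ψ s)) + α * Q' s' (π s'))) :
    ∀ s a, Q' s a = Q s a - ψ s := by
  intro s₀ a₀
  haveI : Nonempty S := ⟨s₀⟩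
  obtain ⟨hα0, hα1⟩ := hα
  set D : S → A → ℝ := fun s a => Q' s a - Q s a + ψ s with hD
  have key : ∀ s a, D s a = α * ∑ s', p s a s' * D s' (π s') := by
    intro s a
    have h1 := hQ s a
    have h2 := hQ' s a
    have hs := hsum s a
    have expand : D s a
        = ∑ s', (α * (p s a s' * D s' (π s')) - p s a s' * ψ s) + ψ s := by
      simp only [hD]
      rw [h1, h2, ← Finset.sum_sub_distrib]
      congr 1
      apply Finset.sum_congr rfl
      intro x _
      ring
    rw [expand, Finset.sum_sub_distrib, ← Finset.mul_sum, ← Finset.sum_mul, hs]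
    ring
  -- max of |D s (π s)|
  set M : ℝ := Finset.univ.sup' Finset.univ_nonempty (fun s => |D s (π s)|) with hM
  have hMnn : 0 ≤ M := le_trans (abs_nonneg _)
    (Finset.le_sup' (fun s => |D s (π s)|) (Finset.mem_univ s₀))
  have hbound : ∀ s a, |D s a| ≤ α * M := by
    intro s a
    rw [key s a, abs_mul, abs_of_pos hα0]
    apply mul_le_mul_of_nonneg_left _ (le_of_lt hα0)
    calc |∑ s', p s a s' * D s' (π s')|
        ≤ ∑ s', |p s a s' * D s' (π s')| := Finset.abs_sum_le_sum_abs _ _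
      _ ≤ ∑ s', p s a s' * M := by
          apply Finset.sum_le_sum
          intro x _
          rw [abs_mul, abs_of_nonneg (hp s a x)]
          exact mul_le_mul_of_nonneg_left
            (Finset.le_sup' (fun s => |D s (π s)|) (Finset.mem_univ x)) (hp s a x)
      _ = M := by rw [← Finset.sum_mul, hsum s a, one_mul]
  have hMle : M ≤ α * M := by
    obtain ⟨s', _, hs'⟩ := Finset.exists_mem_eq_sup' Finset.univ_nonempty
      (fun s => |D s (π s)|)
    calc M = |D s' (π s')| := hs'
      _ ≤ α * M := hbound s' (π s')
  have hM0 : M = 0 := by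
    nlinarith
  have hzero : ∀ s, D s (π s) = 0 := by
    intro s
    have := hbound s (π s)
    rw [hM0, mul_zero] at this
    exact abs_nonpos_iff.mp this
  have : D s₀ a₀ = 0 := by
    rw [key s₀ a₀]
    have : ∑ s', p s₀ a₀ s' * D s' (π s') = 0 := by
      apply Finset.sum_eq_zero
      intro x _
      rw [hzero x, mul_zero]
    rw [this, mul_zero]
  simp only [hD] at this
  linarith
end

section
/- (Potential-based shaping preserves optimal policies) With shaped reward R'(s,a,s') = αψ(s') − ψ(s) added to an MDP M, the shaped MDP M' satisfies Q'^*(s,a) = Q^*(s,a) − ψ(s) for all (s,a); hence argmax_a Q'^*(s,a) = argmax_a Q^*(s,a) for every state s, so M and M' have the same optimal policies. -/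
/-- Potential-based shaping preserves optimal Q-values up to -ψ, and hence optimal policies. -/
theorem stmt_7 {S A : Type*} [Fintype S] [Fintype A] [Nonempty A]
    (p : S → A → S → ℝ) (hp : ∀ s a s', 0 ≤ p s a s')
    (hsum : ∀ s a, ∑ s', p s a s' = 1)
    (r : S → A → ℝ) (α : ℝ) (hα : α ∈ Set.Ioo (0 : ℝ) 1)
    (ψ : S → ℝ) (Q Q' : S → A → ℝ)
    (hQ : ∀ s a, Q s a = r s a + α * ∑ s', p s a s' * (⨆ a', Q s' a'))
    (hQ' : ∀ s a, Q' s a =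
      r s a + (∑ s', p s a s' * (α * ψ s' - ψ s)) + α * ∑ s', p s a s' * (⨆ a', Q' s' a')) :
    (∀ s a, Q' s a = Q s a - ψ s) ∧
    ∀ s, {a | ∀ b, Q' s b ≤ Q' s a} = {a | ∀ b, Q s b ≤ Q s a} := by
  obtain ⟨hα0, hα1⟩ := hα
  have key : ∀ s a, Q' s a = Q s a - ψ s := by
    rcases isEmpty_or_nonempty S with hS | hS
    · exact fun s => isEmptyElim s
    set D : S → A → ℝ := fun s a => Q' s a - (Q s a - ψ s) with hD
    -- recursion for D
    have hrec : ∀ s a, D s a =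
        α * ∑ s', p s a s' * ((⨆ a', Q' s' a') - (⨆ a', Q s' a') + ψ s') := by
      intro s a
      have h1 : ∑ s', p s a s' * (α * ψ s' - ψ s)
          = α * (∑ s', p s a s' * ψ s') - ψ s := by
        have : ∑ s', p s a s' * (α * ψ s' - ψ s)
            = α * (∑ s', p s a s' * ψ s') - (∑ s', p s a s') * ψ s := by
          rw [Finset.mul_sum, Finset.sum_mul, ← Finset.sum_sub_distrib]
          exact Finset.sum_congr rfl fun s' _ => by ring
        rw [this, hsum, one_mul]
      have h2 : ∑ s', p s a s' * ((⨆ a', Q' s' a') - (⨆ a', Q s' a') + ψ s')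
          = (∑ s', p s a s' * (⨆ a', Q' s' a'))
            - (∑ s', p s a s' * (⨆ a', Q s' a')) + ∑ s', p s a s' * ψ s' := by
        rw [← Finset.sum_sub_distrib, ← Finset.sum_add_distrib]
        exact Finset.sum_congr rfl fun s' _ => by ring
      rw [hD]; simp only [hQ s a, hQ' s a, h1, h2]; ring
    -- the max of |D|
    set M : ℝ := Finset.univ.sup' (Finset.univ_nonempty (α := S × A))
      (fun sa : S × A => |D sa.1 sa.2|) with hM
    have hDM : ∀ s a, |D s a| ≤ M := fun s a => by
      rw [hM]; exact Finset.le_sup' (fun sa : S × A => |D sa.1 sa.2|)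
        (Finset.mem_univ ((s, a) : S × A))
    have hbdd : ∀ f : A → ℝ, BddAbove (Set.range f) :=
      fun f => (Set.finite_range f).bddAbove
    -- bound on the sup difference
    have hE : ∀ s', |(⨆ a', Q' s' a') - (⨆ a', Q s' a') + ψ s'| ≤ M := by
      intro s'
      rw [abs_le]
      constructor
      · have : (⨆ a', Q s' a') ≤ (⨆ a', Q' s' a') + ψ s' + M := by
          refine ciSup_le fun a => ?_
          have := (abs_le.mp (hDM s' a)).1
          have h2 : Q s' a ≤ Q' s' a + ψ s' + M := by simp [hD] at this ⊢; linarith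
          exact h2.trans (by gcongr; exact le_ciSup (hbdd _) a)
        linarith
      · have : (⨆ a', Q' s' a') ≤ (⨆ a', Q s' a') - ψ s' + M := by
          refine ciSup_le fun a => ?_
          have := (abs_le.mp (hDM s' a)).2
          have h2 : Q' s' a ≤ Q s' a - ψ s' + M := by simp [hD] at this ⊢; linarith
          exact h2.trans (by gcongr; exact le_ciSup (hbdd _) a)
        linarith
    -- contraction: M ≤ α * M
    have hMle : M ≤ α * M := by
      obtain ⟨⟨s, a⟩, -, hsa⟩ := Finset.exists_mem_eq_sup'
        (Finset.univ_nonempty (α := S × A)) (fun sa : S × A => |D sa.1 sa.2|)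
      have hbound : |∑ s', p s a s' * ((⨆ a', Q' s' a') - (⨆ a', Q s' a') + ψ s')| ≤ M := by
        calc |∑ s', p s a s' * ((⨆ a', Q' s' a') - (⨆ a', Q s' a') + ψ s')|
            ≤ ∑ s', |p s a s' * ((⨆ a', Q' s' a') - (⨆ a', Q s' a') + ψ s')| :=
              Finset.abs_sum_le_sum_abs _ _
          _ ≤ ∑ s', p s a s' * M := by
              refine Finset.sum_le_sum fun s' _ => ?_
              rw [abs_mul, abs_of_nonneg (hp s a s')]
              exact mul_le_mul_of_nonneg_left (hE s') (hp s a s')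
          _ = M := by rw [← Finset.sum_mul, hsum, one_mul]
      calc M = |D s a| := by rw [hM]; exact hsa
        _ = α * |∑ s', p s a s' * ((⨆ a', Q' s' a') - (⨆ a', Q s' a') + ψ s')| := by
            rw [hrec s a, abs_mul, abs_of_pos hα0]
        _ ≤ α * M := mul_le_mul_of_nonneg_left hbound hα0.le
    have hM0 : 0 ≤ M := (abs_nonneg _).trans (hDM (Classical.arbitrary S) (Classical.arbitrary A))
    have hMeq : M = 0 := by nlinarith
    intro s a
    have := hDM s a
    rw [hMeq, abs_le] at this
    simp [hD] at this ⊢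
    linarith [this.1, this.2]
  refine ⟨key, fun s => ?_⟩
  ext a
  simp only [Set.mem_setOf_eq, key, sub_le_sub_iff_right]
end

section
/- (Projected Bellman operator is a contraction) Let Π = Φ(Φ^⊤DΦ)^{-1}Φ^⊤D be the D-weighted orthogonal projection onto the column span of Φ, where D is the diagonal matrix of the stationary distribution of the row-stochastic matrix H. Then the composed operator Q ↦ Π(R + αHQ) is a contraction in the D-weighted Euclidean norm with modulus at most α, and hence has a unique fixed point. -/
open Matrix


section aux
variable {C k : ℕ}

noncomputable def qd (d : Fin C → ℝ) (x : Fin C → ℝ) : ℝ := ∑ i, d i * x i ^ 2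

lemma qd_nonneg (d : Fin C → ℝ) (hd : ∀ i, 0 ≤ d i) (x : Fin C → ℝ) : 0 ≤ qd d x :=
  Finset.sum_nonneg fun i _ => mul_nonneg (hd i) (sq_nonneg _)

lemma qd_eq_zero (d : Fin C → ℝ) (hd : ∀ i, 0 < d i) {x : Fin C → ℝ} (h : qd d x = 0) :
    x = 0 := by
  funext i
  have h1 := (Finset.sum_eq_zero_iff_of_nonneg
    (fun i _ => mul_nonneg (hd i).le (sq_nonneg (x i)))).1 h i (Finset.mem_univ i)
  have h2 := (mul_eq_zero.1 h1).resolve_left (hd i).ne'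
  simpa using pow_eq_zero_iff (n := 2) (by norm_num) |>.1 h2

lemma qd_dot (d x : Fin C → ℝ) : qd d x = x ⬝ᵥ (Matrix.diagonal d *ᵥ x) := by
  simp only [qd, dotProduct, Matrix.mulVec_diagonal]
  exact Finset.sum_congr rfl fun i _ => by ring

lemma dot_mulVec_left (Φ : Matrix (Fin C) (Fin k) ℝ) (w : Fin k → ℝ) (u : Fin C → ℝ) :
    (Φ *ᵥ w) ⬝ᵥ u = w ⬝ᵥ (Φᵀ *ᵥ u) := by
  rw [dotProduct_comm, dotProduct_mulVec, Matrix.mulVec_transpose, dotProduct_comm]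

lemma gram_isUnit (d : Fin C → ℝ) (hd : ∀ i, 0 < d i) (Φ : Matrix (Fin C) (Fin k) ℝ)
    (hΦ : Function.Injective fun w : Fin k → ℝ => Φ *ᵥ w) :
    IsUnit (Φᵀ * Matrix.diagonal d * Φ) := by
  rw [← Matrix.mulVec_injective_iff_isUnit]
  intro w₁ w₂ h
  have key : ∀ w : Fin k → ℝ, (Φᵀ * Matrix.diagonal d * Φ) *ᵥ w = 0 → w = 0 := by
    intro w hw
    have h0 : w ⬝ᵥ ((Φᵀ * Matrix.diagonal d * Φ) *ᵥ w) = 0 := by rw [hw]; simp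
    have h1 : (Φᵀ * Matrix.diagonal d * Φ) *ᵥ w
        = Φᵀ *ᵥ (Matrix.diagonal d *ᵥ (Φ *ᵥ w)) := by
      rw [Matrix.mulVec_mulVec, Matrix.mulVec_mulVec]
    have h2 : qd d (Φ *ᵥ w) = 0 := by
      rw [qd_dot, dot_mulVec_left, ← h1, h0]
    have h3 : Φ *ᵥ w = 0 := qd_eq_zero d hd h2
    have := hΦ (a₁ := w) (a₂ := 0) (by simpa using h3)
    simpa using this
  exact sub_eq_zero.1 (key (w₁ - w₂) (by rw [Matrix.mulVec_sub, h, sub_self]))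
end aux

section aux2
variable {C k : ℕ}

lemma proj_qd_le (d : Fin C → ℝ) (hd : ∀ i, 0 < d i) (Φ : Matrix (Fin C) (Fin k) ℝ)
    (hΦ : Function.Injective fun w : Fin k → ℝ => Φ *ᵥ w) (x : Fin C → ℝ) :
    qd d ((Φ * (Φᵀ * Matrix.diagonal d * Φ)⁻¹ * Φᵀ * Matrix.diagonal d) *ᵥ x) ≤ qd d x := by
  set M := Φᵀ * Matrix.diagonal d * Φ with hM
  have hMu : IsUnit M := gram_isUnit d hd Φ hΦ
  have hMinv : M * M⁻¹ = 1 := Matrix.mul_nonsing_inv M ((Matrix.isUnit_iff_isUnit_det M).1 hMu)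
  set w : Fin k → ℝ := M⁻¹ *ᵥ (Φᵀ *ᵥ (Matrix.diagonal d *ᵥ x)) with hw
  set p : Fin C → ℝ := Φ *ᵥ w with hp
  have hpx : (Φ * M⁻¹ * Φᵀ * Matrix.diagonal d) *ᵥ x = p := by
    rw [hp, hw]
    rw [← Matrix.mulVec_mulVec, ← Matrix.mulVec_mulVec, ← Matrix.mulVec_mulVec]
  rw [hpx]
  set y : Fin C → ℝ := x - p with hy
  -- orthogonality: Φᵀ D y = 0
  have horth : Φᵀ *ᵥ (Matrix.diagonal d *ᵥ y) = 0 := by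
    have h1 : Φᵀ *ᵥ (Matrix.diagonal d *ᵥ p) = (M * M⁻¹) *ᵥ (Φᵀ *ᵥ (Matrix.diagonal d *ᵥ x)) := by
      rw [hp, hw, hM]
      simp only [Matrix.mulVec_mulVec, Matrix.mul_assoc]
    rw [hy, Matrix.mulVec_sub, Matrix.mulVec_sub, h1, hMinv, Matrix.one_mulVec, sub_self]
  have hcross : p ⬝ᵥ (Matrix.diagonal d *ᵥ y) = 0 := by
    rw [hp, dot_mulVec_left, horth, dotProduct_zero]
  have hsplit : qd d x = qd d p + qd d y + 2 * (p ⬝ᵥ (Matrix.diagonal d *ᵥ y)) := by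
    simp only [qd, dotProduct, Matrix.mulVec_diagonal, ← Finset.sum_add_distrib,
      Finset.mul_sum]
    refine Finset.sum_congr rfl fun i _ => ?_
    have : x i = p i + y i := by simp [hy]
    rw [this]; ring
  have := qd_nonneg d (fun i => (hd i).le) y
  rw [hsplit, hcross]
  linarith

lemma H_qd_le (d : Fin C → ℝ) (H : Matrix (Fin C) (Fin C) ℝ)
    (hH : ∀ i j, 0 ≤ H i j) (hHrow : ∀ i, ∑ j, H i j = 1)
    (hstat : ∀ j, ∑ i, d i * H i j = d j) (hd : ∀ i, 0 < d i) (x : Fin C → ℝ) :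
    qd d (H *ᵥ x) ≤ qd d x := by
  have step1 : ∀ i, (H *ᵥ x) i ^ 2 ≤ ∑ j, H i j * x j ^ 2 := by
    intro i
    have := Finset.sum_sq_le_sum_mul_sum_of_sq_eq_mul Finset.univ
      (r := fun j => H i j * x j) (f := fun j => H i j) (g := fun j => H i j * x j ^ 2)
      (fun j _ => hH i j) (fun j _ => mul_nonneg (hH i j) (sq_nonneg _))
      (fun j _ => by ring)
    simpa [Matrix.mulVec, dotProduct, hHrow i] using this
  calc qd d (H *ᵥ x) ≤ ∑ i, d i * ∑ j, H i j * x j ^ 2 := by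
        refine Finset.sum_le_sum fun i _ => ?_
        exact mul_le_mul_of_nonneg_left (step1 i) (hd i).le
    _ = ∑ j, (∑ i, d i * H i j) * x j ^ 2 := by
        simp_rw [Finset.mul_sum, Finset.sum_mul]
        rw [Finset.sum_comm]
        exact Finset.sum_congr rfl fun j _ => Finset.sum_congr rfl fun i _ => by ring
    _ = qd d x := by simp only [hstat, qd]
end aux2


/-- The projected Bellman operator Q ↦ Proj(R + αHQ) is an α-contraction in the D-weighted
norm, hence has a unique fixed point. -/
theorem stmt_17 (C k : ℕ) (H : Matrix (Fin C) (Fin C) ℝ)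
    (hH : ∀ i j, 0 ≤ H i j) (hHrow : ∀ i, ∑ j, H i j = 1)
    (d : Fin C → ℝ) (hd : ∀ i, 0 < d i) (hstat : ∀ j, ∑ i, d i * H i j = d j)
    (Φ : Matrix (Fin C) (Fin k) ℝ) (hΦ : Function.Injective fun w : Fin k → ℝ => Φ *ᵥ w)
    (R : Fin C → ℝ) (α : ℝ) (hα : α ∈ Set.Ioo (0 : ℝ) 1)
    (Proj : Matrix (Fin C) (Fin C) ℝ)
    (hProj : Proj = Φ * (Φᵀ * Matrix.diagonal d * Φ)⁻¹ * Φᵀ * Matrix.diagonal d)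
    (F : (Fin C → ℝ) → (Fin C → ℝ))
    (hF : ∀ Q, F Q = Proj *ᵥ (R + α • (H *ᵥ Q))) :
    (∀ Q₁ Q₂ : Fin C → ℝ,
      Real.sqrt (∑ i, d i * (F Q₁ i - F Q₂ i) ^ 2) ≤
        α * Real.sqrt (∑ i, d i * (Q₁ i - Q₂ i) ^ 2)) ∧
    ∃! Q : Fin C → ℝ, F Q = Q := by
  obtain ⟨hα0, hα1⟩ := hα
  have hd' : ∀ i, (0:ℝ) ≤ d i := fun i => (hd i).le
  -- scaling of qd
  have qd_smul : ∀ (c : ℝ) (v : Fin C → ℝ), qd d (c • v) = c ^ 2 * qd d v := by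
    intro c v
    simp only [qd, Pi.smul_apply, smul_eq_mul, Finset.mul_sum]
    exact Finset.sum_congr rfl fun i _ => by ring
  -- difference formula
  have hdiff : ∀ Q₁ Q₂ : Fin C → ℝ,
      F Q₁ - F Q₂ = α • (Proj *ᵥ (H *ᵥ (Q₁ - Q₂))) := by
    intro Q₁ Q₂
    rw [hF, hF, ← Matrix.mulVec_sub, add_sub_add_left_eq_sub, ← smul_sub,
      ← Matrix.mulVec_sub, Matrix.mulVec_smul]
  -- qd contraction
  have hqd : ∀ Q₁ Q₂ : Fin C → ℝ,
      qd d (F Q₁ - F Q₂) ≤ α ^ 2 * qd d (Q₁ - Q₂) := by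
    intro Q₁ Q₂
    rw [hdiff, qd_smul]
    have h1 : qd d (Proj *ᵥ (H *ᵥ (Q₁ - Q₂))) ≤ qd d (H *ᵥ (Q₁ - Q₂)) := by
      rw [hProj]; exact proj_qd_le d hd Φ hΦ _
    have h2 : qd d (H *ᵥ (Q₁ - Q₂)) ≤ qd d (Q₁ - Q₂) :=
      H_qd_le d H hH hHrow hstat hd _
    nlinarith [sq_nonneg α]
  have hcontr : ∀ Q₁ Q₂ : Fin C → ℝ,
      Real.sqrt (∑ i, d i * (F Q₁ i - F Q₂ i) ^ 2) ≤
        α * Real.sqrt (∑ i, d i * (Q₁ i - Q₂ i) ^ 2) := by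
    intro Q₁ Q₂
    have h1 : (∑ i, d i * (F Q₁ i - F Q₂ i) ^ 2) = qd d (F Q₁ - F Q₂) := rfl
    have h2 : (∑ i, d i * (Q₁ i - Q₂ i) ^ 2) = qd d (Q₁ - Q₂) := rfl
    rw [h1, h2]
    calc Real.sqrt (qd d (F Q₁ - F Q₂)) ≤ Real.sqrt (α ^ 2 * qd d (Q₁ - Q₂)) :=
          Real.sqrt_le_sqrt (hqd Q₁ Q₂)
      _ = α * Real.sqrt (qd d (Q₁ - Q₂)) := by
          rw [Real.sqrt_mul (sq_nonneg α), Real.sqrt_sq hα0.le]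
  refine ⟨hcontr, ?_⟩
  -- existence and uniqueness
  set A : Matrix (Fin C) (Fin C) ℝ := 1 - α • (Proj * H) with hA
  have hAv : ∀ Q : Fin C → ℝ, A *ᵥ Q = Q - α • (Proj *ᵥ (H *ᵥ Q)) := by
    intro Q
    rw [hA, Matrix.sub_mulVec, Matrix.one_mulVec, Matrix.smul_mulVec,
      Matrix.mulVec_mulVec]
  have hfix : ∀ Q : Fin C → ℝ, F Q = Q ↔ A *ᵥ Q = Proj *ᵥ R := by
    intro Q
    rw [hF, Matrix.mulVec_add, Matrix.mulVec_smul, hAv]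
    generalize α • (Proj *ᵥ (H *ᵥ Q)) = v
    constructor
    · intro h; rw [← h]; abel
    · intro h; rw [← h]; abel
  -- injectivity of A
  have hinj : Function.Injective A.mulVecLin := by
    rw [← LinearMap.ker_eq_bot, LinearMap.ker_eq_bot']
    intro Q hQ
    rw [Matrix.mulVecLin_apply, hAv] at hQ
    have hQeq : Q = α • (Proj *ᵥ (H *ᵥ Q)) := sub_eq_zero.1 hQ
    have h1 : qd d Q ≤ α ^ 2 * qd d Q := by
      calc qd d Q = α ^ 2 * qd d (Proj *ᵥ (H *ᵥ Q)) := by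
            conv_lhs => rw [hQeq]
            exact qd_smul α _
        _ ≤ α ^ 2 * qd d Q := by
            have hP : qd d (Proj *ᵥ (H *ᵥ Q)) ≤ qd d (H *ᵥ Q) := by
              rw [hProj]; exact proj_qd_le d hd Φ hΦ _
            have hHq : qd d (H *ᵥ Q) ≤ qd d Q := H_qd_le d H hH hHrow hstat hd _
            nlinarith [sq_nonneg α]
    have hq0 : qd d Q = 0 := by
      have hnn := qd_nonneg d hd' Q
      have hlt : α ^ 2 < 1 := by nlinarith
      have hle : qd d Q ≤ 0 := by nlinarith
      exact le_antisymm hle hnn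
    exact qd_eq_zero d hd hq0
  have hsurj : Function.Surjective A.mulVecLin :=
    (LinearMap.injective_iff_surjective).1 hinj
  obtain ⟨Q₀, hQ₀⟩ := hsurj (Proj *ᵥ R)
  rw [Matrix.mulVecLin_apply] at hQ₀
  have hfix₀ : F Q₀ = Q₀ := (hfix Q₀).2 hQ₀
  refine ⟨Q₀, hfix₀, ?_⟩
  intro Q' hQ'
  have hc := hcontr Q' Q₀
  rw [hQ', hfix₀] at hc
  set s := Real.sqrt (∑ i, d i * (Q' i - Q₀ i) ^ 2) with hs
  have hs0 : 0 ≤ s := Real.sqrt_nonneg _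
  have hseq : s = 0 := by nlinarith
  have hqz : qd d (Q' - Q₀) = 0 := by
    have hnn : (0:ℝ) ≤ ∑ i, d i * (Q' i - Q₀ i) ^ 2 := qd_nonneg d hd' (Q' - Q₀)
    have := Real.sqrt_eq_zero hnn |>.1 hseq
    exact this
  have := qd_eq_zero d hd hqz
  exact sub_eq_zero.1 this
end
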